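/- For every m ∈ ℝ, the equilibrium e3^m = (0,0,m) of the Rabinovich system is nonlinearly (Lyapunov) stable: for every ε > 0 there exists δ > 0 such that every solution x : [0,∞) → ℝ³ of the Rabinovich system with ‖x(0) − (0,0,m)‖ < δ satisfies ‖x(t) − (0,0,m)‖ < ε for all t ≥ 0. -/

import Mathlib

/-!
Writing `x = (a, b, c)`, the quantities `a² + b²` and `b² + c²` are conserved, so `a` and `b`
stay small and `c²` moves by at most `F := a(0)² + b(0)²`. If `c` keeps its sign, this already
gives `(c(t) - c(0))² ≤ F`. If `c` vanishes at some time, conservation forces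
`c(0)² ≤ a(0)² ≤ F`, so `c` remains within `√F` of `0`. Either way `|c(t) - c(0)| ≤ 2√F`.
-/

open Matrix

/-- The Rabinovich vector field X(x₁,x₂,x₃) = (x₂x₃, −x₁x₃, x₁x₂). -/
def rabinovichField (x : Fin 3 → ℝ) : Fin 3 → ℝ :=
  ![x 1 * x 2, -(x 0 * x 2), x 0 * x 1]

/-- x : [0,∞) → ℝ³ is a solution of the Rabinovich system. -/
def IsSolutionOnIci (x : ℝ → Fin 3 → ℝ) : Prop :=
  ∀ t ∈ Set.Ici (0 : ℝ), ∀ i : Fin 3,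
    HasDerivWithinAt (fun s => x s i) (rabinovichField (x t) i) (Set.Ici (0 : ℝ)) t

open Set

theorem eq_of_hasDerivWithinAt_Ici_zero {E : Type*} [NormedAddCommGroup E] [NormedSpace ℝ E]
    {f : ℝ → E} {a : ℝ}
    (hf : ∀ s ∈ Ici a, HasDerivWithinAt f 0 (Ici a) s) {t : ℝ} (ht : a ≤ t) : f t = f a :=
  constant_of_has_deriv_right_zero
    (fun s hs => (hf s hs.1).continuousWithinAt.mono Icc_subset_Ici_self)
    (fun s hs => (hf s hs.1).mono (Ici_subset_Ici.2 hs.1)) t ⟨ht, le_rfl⟩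

theorem sq_add_sq_eq_of_hasDerivWithinAt_Ici {f g f' g' : ℝ → ℝ} {a : ℝ}
    (hf : ∀ s ∈ Ici a, HasDerivWithinAt f (f' s) (Ici a) s)
    (hg : ∀ s ∈ Ici a, HasDerivWithinAt g (g' s) (Ici a) s)
    (h : ∀ s ∈ Ici a, f s * f' s + g s * g' s = 0) {t : ℝ} (ht : a ≤ t) :
    f t ^ 2 + g t ^ 2 = f a ^ 2 + g a ^ 2 := by
  have hderiv : ∀ s ∈ Ici a, HasDerivWithinAt (fun s => f s ^ 2 + g s ^ 2) 0 (Ici a) s :=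
    fun s hs => (((hf s hs).fun_pow 2).fun_add ((hg s hs).fun_pow 2)).congr_deriv
      (by push_cast; linear_combination 2 * h s hs)
  exact eq_of_hasDerivWithinAt_Ici_zero hderiv ht

theorem exists_mem_Icc_eq_zero_of_mul_nonpos {α : Type*} [ConditionallyCompleteLinearOrder α]
    [TopologicalSpace α] [OrderTopology α] [DenselyOrdered α] {f : α → ℝ} {a b : α}
    (hab : a ≤ b) (hf : ContinuousOn f (Icc a b)) (h : f a * f b ≤ 0) :
    ∃ s ∈ Icc a b, f s = 0 := by
  have hzero : (0 : ℝ) ∈ uIcc (f a) (f b) := by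
    rcases mul_nonpos_iff.1 h with ⟨ha, hb⟩ | ⟨ha, hb⟩
    · exact mem_uIcc.2 (Or.inr ⟨hb, ha⟩)
    · exact mem_uIcc.2 (Or.inl ⟨ha, hb⟩)
  rw [← uIcc_of_le hab] at hf ⊢
  exact intermediate_value_uIcc hf hzero

theorem sq_sub_le_of_mul_pos {a b F : ℝ} (hab : 0 < a * b) (h : |a ^ 2 - b ^ 2| ≤ F) :
    (a - b) ^ 2 ≤ F := by
  obtain ⟨h₁, h₂⟩ := abs_le.1 h
  nlinarith

theorem norm_sub_vec3_lt_iff {v : Fin 3 → ℝ} {p q r ε : ℝ} (hε : 0 < ε) :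
    ‖v - ![p, q, r]‖ < ε ↔ |v 0 - p| < ε ∧ |v 1 - q| < ε ∧ |v 2 - r| < ε := by
  rw [pi_norm_lt_iff hε, Fin.forall_fin_succ, Fin.forall_fin_succ, Fin.forall_fin_one]
  simp [Real.norm_eq_abs]

namespace IsSolutionOnIci

variable {x : ℝ → Fin 3 → ℝ} {t : ℝ}

theorem sq_add_sq_zero_one (hx : IsSolutionOnIci x) (ht : 0 ≤ t) :
    x t 0 ^ 2 + x t 1 ^ 2 = x 0 0 ^ 2 + x 0 1 ^ 2 :=
  sq_add_sq_eq_of_hasDerivWithinAt_Ici (fun s hs => hx s hs 0) (fun s hs => hx s hs 1)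
    (fun s _ => by simp only [rabinovichField, cons_val_zero, cons_val_one]; ring) ht

theorem sq_add_sq_one_two (hx : IsSolutionOnIci x) (ht : 0 ≤ t) :
    x t 1 ^ 2 + x t 2 ^ 2 = x 0 1 ^ 2 + x 0 2 ^ 2 :=
  sq_add_sq_eq_of_hasDerivWithinAt_Ici (fun s hs => hx s hs 1) (fun s hs => hx s hs 2)
    (fun s _ => by simp only [rabinovichField, cons_val_one, cons_val]; ring) ht

theorem sq_sub_two_le (hx : IsSolutionOnIci x) (ht : 0 ≤ t) :
    (x t 2 - x 0 2) ^ 2 ≤ 4 * (x 0 0 ^ 2 + x 0 1 ^ 2) := by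
  have hF := hx.sq_add_sq_zero_one ht
  have hG := hx.sq_add_sq_one_two ht
  by_cases hsign : 0 < x t 2 * x 0 2
  · have hc := sq_sub_le_of_mul_pos hsign
      (abs_le.2 ⟨by nlinarith, by nlinarith⟩ : |x t 2 ^ 2 - x 0 2 ^ 2| ≤ x 0 0 ^ 2 + x 0 1 ^ 2)
    nlinarith
  · have hcont : ContinuousOn (fun s => x s 2) (Icc 0 t) := fun s hs =>
      (hx s hs.1 2).continuousWithinAt.mono Icc_subset_Ici_self
    obtain ⟨s, hs, hcs⟩ :=
      exists_mem_Icc_eq_zero_of_mul_nonpos ht hcont (by linarith [mul_comm (x t 2) (x 0 2)])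
    have hFs := hx.sq_add_sq_zero_one hs.1
    have hGs := hx.sq_add_sq_one_two hs.1
    have hc_init : x 0 2 ^ 2 ≤ x 0 0 ^ 2 := by nlinarith [sq_nonneg (x s 0)]
    nlinarith [sq_nonneg (x t 2 + x 0 2), sq_nonneg (x t 1)]

end IsSolutionOnIci

/-- For every m ∈ ℝ, the equilibrium (0,0,m) of the Rabinovich system is
nonlinearly (Lyapunov) stable. -/
theorem rabinovich_e3_nonlinearly_stable (m : ℝ) :
    ∀ ε > (0 : ℝ), ∃ δ > (0 : ℝ), ∀ x : ℝ → Fin 3 → ℝ,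
      IsSolutionOnIci x → ‖x 0 - ![0, 0, m]‖ < δ →
        ∀ t ≥ (0 : ℝ), ‖x t - ![0, 0, m]‖ < ε := by
  intro ε hε
  refine ⟨ε / 4, by positivity, fun x hx h0 t ht => ?_⟩
  obtain ⟨ha, hb, hc⟩ := (norm_sub_vec3_lt_iff (by positivity)).1 h0
  rw [sub_zero] at ha hb
  have hF : x 0 0 ^ 2 + x 0 1 ^ 2 < ε ^ 2 / 8 := by
    nlinarith [sq_lt_sq' (abs_lt.1 ha).1 (abs_lt.1 ha).2, sq_lt_sq' (abs_lt.1 hb).1 (abs_lt.1 hb).2]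
  have hFt := hx.sq_add_sq_zero_one ht
  have hc' : |x t 2 - x 0 2| < 3 * ε / 4 :=
    abs_lt_of_sq_lt_sq (by nlinarith [hx.sq_sub_two_le ht]) (by positivity)
  refine (norm_sub_vec3_lt_iff hε).2 ⟨?_, ?_, ?_⟩
  · rw [sub_zero]; exact abs_lt_of_sq_lt_sq (by nlinarith) hε.le
  · rw [sub_zero]; exact abs_lt_of_sq_lt_sq (by nlinarith) hε.le
  · linarith [abs_sub_le (x t 2) (x 0 2) m]
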